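/- Fix β₁ < 0 with c₁ := e^{β₁}/(1+e^{β₁}) < c₂ := 1 + 1/(2β₁). For each β₂ > 0 let ℓ(u) = β₁u + β₂u³ - I(u) on [0,1]. Then every maximizer u of ℓ on [0,1] satisfies u < c₁ or u > c₂. -/

import Mathlib

noncomputable def Ient (u : ℝ) : ℝ :=
  (1 / 2) * u * Real.log u + (1 / 2) * (1 - u) * Real.log (1 - u)

/-!
On `(0, 1)` one has `ℓ'(t) = 3t² (β₂ - q(t))` with `q(t) = (logit t / 2 - β₁) / (3t²)`
(`critCoupling`), so an interior maximizer solves `q(u) = β₂`. For `g(v) = ℓ(v^{1/3})` this is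
`g'(v) = β₂ - q(v^{1/3})`, and `g'' > 0` amounts to `q` decreasing. Indeed
`q'(t) = -N(t) / (3t³)` with `N(t) = (logit t - β₁) + (-β₁ - 1 / (2(1 - t)))`, and on `(c₁, c₂)`
both brackets are positive because `logit c₁ = β₁` and `1 / (2(1 - c₂)) = -β₁`. So `ℓ'` changes
sign from negative to positive at a critical point `u ∈ [c₁, c₂]`, and `ℓ` is strictly larger
at `c₁` or at `c₂`.
-/

open Real Set

theorem strictMonoOn_Icc_of_hasDerivAt_pos {f f' : ℝ → ℝ} {a b : ℝ}
    (hf : ∀ x ∈ Icc a b, HasDerivAt f (f' x) x) (hpos : ∀ x ∈ Ioo a b, 0 < f' x) :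
    StrictMonoOn f (Icc a b) :=
  strictMonoOn_of_hasDerivWithinAt_pos (convex_Icc a b)
    (fun x hx => (hf x hx).continuousAt.continuousWithinAt)
    (fun x hx => (hf x (interior_subset hx)).hasDerivWithinAt)
    (by simpa only [interior_Icc] using hpos)

theorem strictAntiOn_Icc_of_hasDerivAt_neg {f f' : ℝ → ℝ} {a b : ℝ}
    (hf : ∀ x ∈ Icc a b, HasDerivAt f (f' x) x) (hneg : ∀ x ∈ Ioo a b, f' x < 0) :
    StrictAntiOn f (Icc a b) :=
  strictAntiOn_of_hasDerivWithinAt_neg (convex_Icc a b)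
    (fun x hx => (hf x hx).continuousAt.continuousWithinAt)
    (fun x hx => (hf x (interior_subset hx)).hasDerivWithinAt)
    (by simpa only [interior_Icc] using hneg)

theorem not_isMaxOn_Icc_of_hasDerivAt {f f' : ℝ → ℝ} {a b u : ℝ} (hab : a < b)
    (hu : u ∈ Icc a b) (hf : ∀ x ∈ Icc a b, HasDerivAt f (f' x) x)
    (hneg : ∀ x ∈ Ioo a u, f' x < 0) (hpos : ∀ x ∈ Ioo u b, 0 < f' x) :
    ¬ IsMaxOn f (Icc a b) u := by
  intro hmax
  rcases hu.2.lt_or_eq with hub | rfl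
  · have hmono : StrictMonoOn f (Icc u b) :=
      strictMonoOn_Icc_of_hasDerivAt_pos
        (fun x hx => hf x (Icc_subset_Icc_left hu.1 hx)) hpos
    exact (hmono (left_mem_Icc.2 hub.le) (right_mem_Icc.2 hub.le) hub).not_ge
      (hmax ⟨hab.le, le_rfl⟩)
  · have hanti : StrictAntiOn f (Icc a u) :=
      strictAntiOn_Icc_of_hasDerivAt_neg hf hneg
    exact (hanti (left_mem_Icc.2 hab.le) (right_mem_Icc.2 hab.le) hab).not_ge
      (hmax ⟨le_rfl, hab.le⟩)

noncomputable def logit (t : ℝ) : ℝ := log t - log (1 - t)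

theorem logit_exp_div (x : ℝ) : logit (exp x / (1 + exp x)) = x := by
  have hpos : 0 < 1 + exp x := by positivity
  have hsub : 1 - exp x / (1 + exp x) = 1 / (1 + exp x) := by field_simp; ring
  rw [logit, hsub, log_div (exp_pos x).ne' hpos.ne', log_div one_ne_zero hpos.ne', log_exp,
    log_one]
  ring

theorem logit_strictMonoOn : StrictMonoOn logit (Ioo 0 1) := by
  intro s hs t ht hst
  have h₁ : log s < log t := log_lt_log hs.1 hst
  have h₂ : log (1 - t) < log (1 - s) := log_lt_log (by linarith [ht.2]) (by linarith)
  simp only [logit]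
  linarith

theorem hasDerivAt_logit {t : ℝ} (h₀ : 0 < t) (h₁ : t < 1) :
    HasDerivAt logit (t⁻¹ + (1 - t)⁻¹) t := by
  have hsub : HasDerivAt (fun s => log (1 - s)) ((1 - t)⁻¹ * -1) t :=
    (hasDerivAt_log (sub_pos.2 h₁).ne').comp t ((hasDerivAt_id t).const_sub 1)
  exact ((hasDerivAt_log h₀.ne').sub hsub).congr_deriv (by ring)

theorem hasDerivAt_Ient {t : ℝ} (h₀ : 0 < t) (h₁ : t < 1) :
    HasDerivAt Ient (logit t / 2) t := by
  have hsub : HasDerivAt (fun s => (1 - s) * log (1 - s)) ((log (1 - t) + 1) * -1) t :=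
    (hasDerivAt_mul_log (sub_pos.2 h₁).ne').comp t ((hasDerivAt_id t).const_sub 1)
  have h := ((hasDerivAt_mul_log h₀.ne').const_mul (1 / 2 : ℝ)).add (hsub.const_mul (1 / 2 : ℝ))
  have hfun : Ient = fun s => 1 / 2 * (s * log s) + 1 / 2 * ((1 - s) * log (1 - s)) := by
    funext s; simp only [Ient]; ring
  rw [hfun]
  exact h.congr_deriv (by rw [logit]; ring)

noncomputable def ell (β₁ β₂ v : ℝ) : ℝ := β₁ * v + β₂ * v ^ 3 - Ient v

noncomputable def critCoupling (β₁ t : ℝ) : ℝ := (logit t / 2 - β₁) / (3 * t ^ 2)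

theorem hasDerivAt_ell (β₁ β₂ : ℝ) {t : ℝ} (h₀ : 0 < t) (h₁ : t < 1) :
    HasDerivAt (ell β₁ β₂) (3 * t ^ 2 * (β₂ - critCoupling β₁ t)) t := by
  have h : HasDerivAt (fun v => β₁ * v + β₂ * v ^ 3 - Ient v)
      (β₁ * 1 + β₂ * (↑3 * t ^ (3 - 1)) - logit t / 2) t :=
    (((hasDerivAt_id' t).const_mul β₁).add ((hasDerivAt_pow 3 t).const_mul β₂)).sub
      (hasDerivAt_Ient h₀ h₁)
  have ht : (3 * t ^ 2 : ℝ) ≠ 0 := by positivity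
  refine h.congr_deriv ?_
  simp only [critCoupling]
  field_simp
  ring

theorem critCoupling_eq_of_isLocalMax {β₁ β₂ u : ℝ} (h₀ : 0 < u) (h₁ : u < 1)
    (hmax : IsLocalMax (ell β₁ β₂) u) : critCoupling β₁ u = β₂ := by
  have h := hmax.hasDerivAt_eq_zero (hasDerivAt_ell β₁ β₂ h₀ h₁)
  have hu : (3 * u ^ 2 : ℝ) ≠ 0 := by positivity
  linarith [(mul_eq_zero.1 h).resolve_left hu]

theorem hasDerivAt_critCoupling (β₁ : ℝ) {t : ℝ} (h₀ : 0 < t) (h₁ : t < 1) :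
    HasDerivAt (critCoupling β₁)
      (-((logit t - β₁) + (-β₁ - 1 / (2 * (1 - t)))) / (3 * t ^ 3)) t := by
  have h := (((hasDerivAt_logit h₀ h₁).div_const 2).sub_const β₁).div
    ((hasDerivAt_pow 2 t).const_mul 3) (by positivity)
  have h1t : (1 - t : ℝ) ≠ 0 := (sub_pos.2 h₁).ne'
  refine h.congr_deriv ?_
  field_simp
  ring

theorem strictAntiOn_critCoupling {β₁ a b : ℝ} (hβ₁ : β₁ < 0) (ha : 0 < a)
    (ha' : β₁ ≤ logit a) (hb : b ≤ 1 + 1 / (2 * β₁)) :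
    StrictAntiOn (critCoupling β₁) (Icc a b) := by
  have hb₁ : b < 1 := hb.trans_lt (by linarith [one_div_neg.2 (by linarith : 2 * β₁ < 0)])
  refine strictAntiOn_Icc_of_hasDerivAt_neg
    (fun x hx => hasDerivAt_critCoupling β₁ (ha.trans_le hx.1) (hx.2.trans_lt hb₁)) ?_
  intro x hx
  have hx₀ : 0 < x := ha.trans hx.1
  have hx₁ : x < 1 := hx.2.trans hb₁
  have hlogit : β₁ < logit x := ha'.trans_lt <|
    logit_strictMonoOn ⟨ha, hx.1.trans hx₁⟩ ⟨hx₀, hx₁⟩ hx.1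
  have hinv : 1 / (2 * (1 - x)) < -β₁ := by
    have hgap : 2 * β₁ * (1 - x) < 2 * β₁ * -(1 / (2 * β₁)) :=
      mul_lt_mul_of_neg_left (by linarith [hx.2]) (by linarith)
    rw [mul_neg, mul_one_div_cancel (by linarith)] at hgap
    rw [div_lt_iff₀ (by linarith)]
    linarith
  exact div_neg_of_neg_of_pos (by linarith) (by positivity)

theorem maximizer_dichotomy_general (β₁ β₂ : ℝ) (hβ₁ : β₁ < 0)
    (c₁ c₂ : ℝ) (hc₁ : c₁ = Real.exp β₁ / (1 + Real.exp β₁)) (hc₂ : c₂ = 1 + 1 / (2 * β₁))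
    (hcc : c₁ < c₂)
    (u : ℝ)
    (hmax : ∀ v ∈ Set.Icc (0 : ℝ) 1,
      β₁ * v + β₂ * v ^ 3 - Ient v ≤ β₁ * u + β₂ * u ^ 3 - Ient u) :
    u < c₁ ∨ u > c₂ := by
  by_contra! hu
  have hc₁_pos : 0 < c₁ := hc₁ ▸ by positivity
  have hc₂_lt : c₂ < 1 := hc₂ ▸ by linarith [one_div_neg.2 (by linarith : 2 * β₁ < 0)]
  have hu₀ : 0 < u := hc₁_pos.trans_le hu.1
  have hu₁ : u < 1 := hu.2.trans_lt hc₂_lt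
  have hmax : IsMaxOn (ell β₁ β₂) (Icc 0 1) u := isMaxOn_iff.2 hmax
  have hcrit : critCoupling β₁ u = β₂ :=
    critCoupling_eq_of_isLocalMax hu₀ hu₁ (hmax.isLocalMax (Icc_mem_nhds hu₀ hu₁))
  have hanti : StrictAntiOn (critCoupling β₁) (Icc c₁ c₂) :=
    strictAntiOn_critCoupling hβ₁ hc₁_pos (hc₁ ▸ (logit_exp_div β₁).ge) hc₂.le
  refine not_isMaxOn_Icc_of_hasDerivAt hcc hu
    (fun x hx => hasDerivAt_ell β₁ β₂ (hc₁_pos.trans_le hx.1) (hx.2.trans_lt hc₂_lt)) ?_ ?_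
    (hmax.on_subset (Icc_subset_Icc hc₁_pos.le hc₂_lt.le))
  · intro x hx
    have hq := hanti ⟨hx.1.le, hx.2.le.trans hu.2⟩ hu hx.2
    exact mul_neg_of_pos_of_neg (by nlinarith [hc₁_pos.trans hx.1]) (by linarith)
  · intro x hx
    have hq := hanti hu ⟨hu.1.trans hx.1.le, hx.2.le⟩ hx.1
    exact mul_pos (by nlinarith [hu₀.trans hx.1]) (by linarith)

theorem maximizer_dichotomy (β₁ β₂ : ℝ) (hβ₁ : β₁ < 0) (hβ₂ : 0 < β₂)
    (c₁ c₂ : ℝ) (hc₁ : c₁ = Real.exp β₁ / (1 + Real.exp β₁)) (hc₂ : c₂ = 1 + 1 / (2 * β₁))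
    (hcc : c₁ < c₂)
    (u : ℝ) (hu : u ∈ Set.Icc (0 : ℝ) 1)
    (hmax : ∀ v ∈ Set.Icc (0 : ℝ) 1,
      β₁ * v + β₂ * v ^ 3 - Ient v ≤ β₁ * u + β₂ * u ^ 3 - Ient u) :
    u < c₁ ∨ u > c₂ :=
  maximizer_dichotomy_general β₁ β₂ hβ₁ c₁ c₂ hc₁ hc₂ hcc u hmax
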